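/- Let $\chi \colon E^\times \to \mathbb{C}^\times$ be a group homomorphism trivial on $\mathbb{Q}_p^\times$ with conductor exponent $n > 1$. For an integer $k$ with $0 \le k \le n$, let $S_k$ denote the sum $\sum_b \chi(1+b\theta)^{-1}$ taken over a complete set of representatives $b$ of $\mathbb{Z}_p/p^n\mathbb{Z}_p$ with $\mathrm{ord}_p(b) = k$ (where, for $k = n$, the condition means $b \equiv 0 \bmod p^n$). Then $S_k = 0$ if $k < n-1$, $S_{n-1} = -1$, and $S_n = 1$. -/

import Mathlib

open scoped Classical

namespace ArakawaQuad

variable (p : ℕ) [Fact p.Prime]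
variable (E : Type*) [Field E] [Algebra ℚ_[p] E] [Algebra ℤ_[p] E]
  [IsScalarTower ℤ_[p] ℚ_[p] E]

/-- Membership in `𝒪_{E,i} = ℤ_p + p^i 𝒪_E`, where `𝒪_E` is the ring of integers
(the integral closure of `ℤ_p` in `E`). -/
def MemOEi (i : ℕ) (z : E) : Prop :=
  ∃ a : ℤ_[p], ∃ w ∈ integralClosure ℤ_[p] E, z = algebraMap ℤ_[p] E a + (p : E) ^ i * w

/-- Membership of a unit `u ∈ Eˣ` in `𝒪_{E,i}^× = 𝒪_{E,i} ∩ 𝒪_E^×`. -/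
def MemOEiUnits (i : ℕ) (u : Eˣ) : Prop :=
  MemOEi p E i ↑u ∧ (↑u : E) ∈ integralClosure ℤ_[p] E ∧
    ((↑u⁻¹ : E) ∈ integralClosure ℤ_[p] E)

/-- `χ : E^× → ℂ^×` is trivial on `ℚ_p^×`. -/
def TrivialOnQp (χ : Eˣ →* ℂˣ) : Prop :=
  ∀ t : ℚ_[p]ˣ, χ (Units.map (algebraMap ℚ_[p] E).toMonoidHom t) = 1

/-- `χ` has conductor exponent `n`: it is trivial on `𝒪_{E,n}^×` and, when `n > 0`,
nontrivial on `𝒪_{E,n-1}^×`. -/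
def CondExp (χ : Eˣ →* ℂˣ) (n : ℕ) : Prop :=
  (∀ u : Eˣ, MemOEiUnits p E n u → χ u = 1) ∧
  (0 < n → ∃ u : Eˣ, MemOEiUnits p E (n - 1) u ∧ χ u ≠ 1)

/-- The value of `χ : E^× → ℂ^×` at an element of `E`, with junk value `0` at `0`. -/
noncomputable def chiV {F : Type*} [Field F] (χ : Fˣ →* ℂˣ) (z : F) : ℂ :=
  if h : z ≠ 0 then (χ (Units.mk0 z h) : ℂ) else 0

/-- `E` is an unramified quadratic extension of `ℚ_p`: it has degree `2` and the
maximal ideal of its ring of integers `𝒪_E` is `p 𝒪_E` (an element of `𝒪_E` is a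
unit of `𝒪_E` if and only if it does not lie in `p 𝒪_E`). -/
def Unramified : Prop :=
  Module.finrank ℚ_[p] E = 2 ∧
  ∀ z ∈ integralClosure ℤ_[p] E,
    ((∃ w ∈ integralClosure ℤ_[p] E, z * w = 1) ↔
      ¬ ∃ w ∈ integralClosure ℤ_[p] E, z = (p : E) * w)

/-- `E` is a ramified quadratic extension of `ℚ_p` with maximal ideal `𝔭 = θ 𝒪_E`
satisfying `𝔭² = p 𝒪_E`: it has degree `2`, `θ ∈ 𝒪_E` generates the maximal ideal
(an element of `𝒪_E` is a unit of `𝒪_E` iff it is not in `θ 𝒪_E`), and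
`θ² = p u` for a unit `u` of `𝒪_E`. -/
def Ramified (θ : E) : Prop :=
  Module.finrank ℚ_[p] E = 2 ∧
  θ ∈ integralClosure ℤ_[p] E ∧
  (∀ z ∈ integralClosure ℤ_[p] E,
    ((∃ w ∈ integralClosure ℤ_[p] E, z * w = 1) ↔
      ¬ ∃ w ∈ integralClosure ℤ_[p] E, z = θ * w)) ∧
  (∃ u ∈ integralClosure ℤ_[p] E,
    (∃ v ∈ integralClosure ℤ_[p] E, u * v = 1) ∧ θ ^ 2 = (p : E) * u)

/-- `{1, θ}` is a `ℤ_p`-basis of the ring of integers `𝒪_E`. -/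
def IsIntBasis (θ : E) : Prop :=
  θ ∈ integralClosure ℤ_[p] E ∧
  ∀ z ∈ integralClosure ℤ_[p] E, ∃! ab : ℤ_[p] × ℤ_[p],
    z = algebraMap ℤ_[p] E ab.1 + algebraMap ℤ_[p] E ab.2 * θ

/-- `x` lies in the double coset `ℚ_p^× y 𝒪_{E,i}^×` inside `E^×`. -/
def InCoset (i : ℕ) (y x : E) : Prop :=
  ∃ t : ℚ_[p]ˣ, ∃ u : Eˣ, MemOEiUnits p E i u ∧
    x = algebraMap ℚ_[p] E ↑t * y * ↑u

/-- The unit group `𝒪_E^×`, as a subgroup of `E^×`. -/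
def OEUnits : Subgroup Eˣ where
  carrier := {u | (↑u : E) ∈ integralClosure ℤ_[p] E ∧
    ((↑u⁻¹ : E) ∈ integralClosure ℤ_[p] E)}
  one_mem' := ⟨by simpa using (integralClosure ℤ_[p] E).one_mem,
    by simpa using (integralClosure ℤ_[p] E).one_mem⟩
  mul_mem' := by
    rintro a b ⟨ha1, ha2⟩ ⟨hb1, hb2⟩
    refine ⟨?_, ?_⟩
    · simpa [Units.val_mul] using mul_mem ha1 hb1
    · simpa [Units.val_mul, mul_inv_rev] using mul_mem hb2 ha2
  inv_mem' := by
    rintro a ⟨h1, h2⟩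
    exact ⟨h2, by simpa using h1⟩

end ArakawaQuad

open ArakawaQuad

/-!
For `w ∈ 𝒪_E` put `ψ(w) = χ(1 + p^{n-1} w)` (`conductorChar`). As `n ≥ 2` and `χ` is trivial on
`𝒪_{E,n}^×`, `ψ` is an additive character of `𝒪_E / p𝒪_E`; it is trivial on `ℤ_p` because `χ`
is trivial on `ℚ_p^×`, and nontrivial because the conductor exponent is exactly `n`.

For `u = 1 + bθ` the exact identity `1 + (b + m p^{n-1})θ = u (1 + p^{n-1} m θ u⁻¹)` gives
`χ(1 + (b + m p^{n-1})θ) = χ(u) ψ(θ u⁻¹)^m`. Here `ψ(θ u⁻¹) ≠ 1`: otherwise also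
`ψ(u⁻¹) = ψ(1 - bθu⁻¹) = 1`, and `ψ` would vanish on `ℤ_p u⁻¹ + ℤ_p θ u⁻¹ = 𝒪_E`. Hence the
`p` terms `b + m p^{n-1}`, `m < p`, contribute `0`, so the sum over a residue system mod `p^n` of
any set stable under `b ↦ b + p^{n-1}` vanishes. For `k < n - 1` the set `ord_p b = k` is stable;
for `k = n - 1` adding the class of `0` gives the stable set `p^{n-1} ℤ_p`, so `S_{n-1} = -1`;
for `k = n` the only class is that of `0`.
-/

namespace ArakawaQuad

open Finset

lemma pow_sub_one_eq_mul_pow_sub_two {M : Type*} [Monoid M] (x : M) {n : ℕ} (hn : 1 < n) :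
    x ^ (n - 1) = x * x ^ (n - 2) := by
  rw [← pow_succ']
  congr 1
  omega

section ResidueSystem

variable {R : Type*} [CommRing R]

def IsResidueSystem (q : R) (P : R → Prop) (T : Finset R) : Prop :=
  (∀ b ∈ T, P b) ∧ ∀ x, P x → ∃! b, b ∈ T ∧ q ∣ x - b

namespace IsResidueSystem

variable {q s : R} {P : R → Prop} {T : Finset R} {M : Type*} [AddCommMonoid M] {g : R → M}

lemma eq_of_dvd_sub (hT : IsResidueSystem q P T) {b b' : R} (hb : b ∈ T) (hb' : b' ∈ T)
    (h : q ∣ b - b') : b = b' :=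
  (hT.2 b (hT.1 b hb)).unique ⟨hb, by simp⟩ ⟨hb', h⟩

lemma sum_comp_add (hT : IsResidueSystem q P T) (hP : ∀ x, P x → P (x + s))
    (hg : ∀ x y, q ∣ x - y → g x = g y) : ∑ b ∈ T, g (b + s) = ∑ b ∈ T, g b := by
  choose σ hσT hσ using fun b (hb : b ∈ T) => (hT.2 (b + s) (hP b (hT.1 b hb))).exists
  have hσinj : ∀ b₁ b₂ hb₁ hb₂, σ b₁ hb₁ = σ b₂ hb₂ → b₁ = b₂ := by
    intro b₁ b₂ hb₁ hb₂ h
    refine hT.eq_of_dvd_sub hb₁ hb₂ ?_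
    have := dvd_sub (hσ b₁ hb₁) (hσ b₂ hb₂)
    rwa [h, sub_sub_sub_cancel_right, add_sub_add_right_eq_sub] at this
  refine sum_bij σ hσT (fun b₁ hb₁ b₂ hb₂ => hσinj b₁ b₂ hb₁ hb₂) (fun b hb => ?_)
    (fun b hb => hg _ _ (hσ b hb))
  obtain ⟨a, ha, h⟩ := surj_on_of_inj_on_of_card_le σ hσT hσinj le_rfl b hb
  exact ⟨a, ha, h.symm⟩

lemma sum_comp_add_natCast_mul (hT : IsResidueSystem q P T) (hP : ∀ x, P x → P (x + s))
    (hg : ∀ x y, q ∣ x - y → g x = g y) (m : ℕ) :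
    ∑ b ∈ T, g (b + m * s) = ∑ b ∈ T, g b := by
  induction m with
  | zero => simp
  | succ m ih =>
    have hg' : ∀ x y, q ∣ x - y → g (x + m * s) = g (y + m * s) := fun x y h =>
      hg _ _ (by rwa [add_sub_add_right_eq_sub])
    rw [← ih, ← hT.sum_comp_add hP hg']
    congr! 2
    push_cast
    ring

lemma sum_eq_zero [IsAddTorsionFree M] (hT : IsResidueSystem q P T)
    (hP : ∀ x, P x → P (x + s)) (hg : ∀ x y, q ∣ x - y → g x = g y) {N : ℕ} (hN : N ≠ 0)
    (hfiber : ∀ b ∈ T, ∑ m ∈ range N, g (b + m * s) = 0) : ∑ b ∈ T, g b = 0 := by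
  refine (nsmul_eq_zero_iff_right hN).1 ?_
  calc N • ∑ b ∈ T, g b = ∑ m ∈ range N, ∑ b ∈ T, g (b + m * s) := by
        simp [hT.sum_comp_add_natCast_mul hP hg]
    _ = ∑ b ∈ T, ∑ m ∈ range N, g (b + m * s) := sum_comm
    _ = 0 := Finset.sum_eq_zero hfiber

lemma insert_zero {Q : R → Prop} (hT : IsResidueSystem q (fun x => Q x ∧ ¬ q ∣ x) T)
    (hQ : Q 0) : IsResidueSystem q Q (insert 0 T) := by
  refine ⟨fun b hb => ?_, fun x hx => ?_⟩
  · rcases mem_insert.1 hb with rfl | hb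
    exacts [hQ, (hT.1 b hb).1]
  by_cases hqx : q ∣ x
  · refine ⟨0, ⟨mem_insert_self 0 T, by simpa⟩, fun b ⟨hb, hxb⟩ => ?_⟩
    rcases mem_insert.1 hb with rfl | hb
    · rfl
    · exact absurd (by simpa using dvd_sub hqx hxb) (hT.1 b hb).2
  · obtain ⟨b, ⟨hb, hxb⟩, huniq⟩ := hT.2 x ⟨hx, hqx⟩
    refine ⟨b, ⟨mem_insert_of_mem hb, hxb⟩, fun b' ⟨hb', hxb'⟩ => ?_⟩
    rcases mem_insert.1 hb' with rfl | hb'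
    · exact absurd (by simpa using hxb') hqx
    · exact huniq b' ⟨hb', hxb'⟩

lemma exists_eq_singleton (hT : IsResidueSystem q (q ∣ ·) T) : ∃ b, q ∣ b ∧ T = {b} := by
  obtain ⟨b, ⟨hb, -⟩, -⟩ := hT.2 0 (dvd_zero q)
  refine ⟨b, hT.1 b hb, eq_singleton_iff_unique_mem.2 ⟨hb, fun b' hb' => ?_⟩⟩
  exact hT.eq_of_dvd_sub hb' hb (dvd_sub (hT.1 b' hb') (hT.1 b hb))

end IsResidueSystem

end ResidueSystem

section Character

section Field

variable {F : Type*} [Field F] (χ : Fˣ →* ℂˣ)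

lemma chiV_mul (x y : F) : chiV χ (x * y) = chiV χ x * chiV χ y := by
  by_cases hx : x = 0
  · simp [chiV, hx]
  by_cases hy : y = 0
  · simp [chiV, hy]
  simp [chiV, hx, hy, Units.mk0_mul]

lemma chiV_one : chiV χ (1 : F) = 1 := by
  simp [chiV]

lemma chiV_coe_units (u : Fˣ) : chiV χ u = χ u := by
  simp [chiV]

noncomputable def conductorChar (p : ℕ) (χ : Fˣ →* ℂˣ) (n : ℕ) (w : F) : ℂ :=
  chiV χ (1 + (p : F) ^ (n - 1) * w)

lemma conductorChar_zero (p n : ℕ) : conductorChar p χ n 0 = 1 := by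
  simp [conductorChar, chiV_one]

end Field

variable {p : ℕ} [Fact p.Prime] {E : Type*} [Field E] [Algebra ℤ_[p] E]

local notation "𝒪" => integralClosure ℤ_[p] E
local notation "ι" => algebraMap ℤ_[p] E

lemma exists_natCast_dvd_sub (c : ℤ_[p]) : ∃ m : ℕ, (p : ℤ_[p]) ∣ c - m := by
  obtain ⟨m, -, hm⟩ := PadicInt.exists_mem_range c
  rw [PadicInt.maximalIdeal_eq_span_p, Ideal.mem_span_singleton] at hm
  exact ⟨m, hm⟩

lemma isUnit_of_not_dvd {a : ℤ_[p]} (h : ¬ (p : ℤ_[p]) ∣ a) : IsUnit a := by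
  by_contra ha
  rw [← mem_nonunits_iff, ← IsLocalRing.mem_maximalIdeal, PadicInt.maximalIdeal_eq_span_p,
    Ideal.mem_span_singleton] at ha
  exact h ha

lemma natCast_mem_integralClosure : (p : E) ∈ 𝒪 :=
  Subalgebra.natCast_mem 𝒪 p

lemma IsIntBasis.coeff_unique {θ : E} (hθ : IsIntBasis p E θ) {a b c d : ℤ_[p]}
    (h : ι a + ι b * θ = ι c + ι d * θ) : a = c ∧ b = d := by
  obtain ⟨ab, -, huniq⟩ := hθ.2 _ (add_mem (Subalgebra.algebraMap_mem _ a)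
    (mul_mem (Subalgebra.algebraMap_mem _ b) hθ.1))
  exact Prod.ext_iff.1 ((huniq (a, b) rfl).trans (huniq (c, d) h).symm)

variable [Algebra ℚ_[p] E] {χ : Eˣ →* ℂˣ} {n : ℕ}

lemma chiV_algebraMap_eq_one [IsScalarTower ℤ_[p] ℚ_[p] E] (hχQ : TrivialOnQp p E χ)
    {a : ℤ_[p]} (ha : a ≠ 0) : chiV χ (ι a) = 1 := by
  have ht : (a : ℚ_[p]) ≠ 0 := by simpa using ha
  have hunit : Units.map (algebraMap ℚ_[p] E).toMonoidHom (Units.mk0 _ ht) = ι a := by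
    simp [IsScalarTower.algebraMap_apply ℤ_[p] ℚ_[p] E, PadicInt.algebraMap_apply]
  rw [← hunit, chiV_coe_units, hχQ, Units.val_one]

lemma Unramified.not_one_mem_p_mul (hE : Unramified p E) : ¬ ∃ w ∈ 𝒪, (1 : E) = p * w :=
  (hE.2 1 (one_mem _)).1 ⟨1, one_mem _, mul_one 1⟩

lemma Unramified.exists_mul_one_add_p_mul_eq_one (hE : Unramified p E) {w : E} (hw : w ∈ 𝒪) :
    ∃ v ∈ 𝒪, (1 + p * w) * v = 1 := by
  refine (hE.2 _ (add_mem (one_mem _) (mul_mem natCast_mem_integralClosure hw))).2 ?_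
  rintro ⟨w', hw', h⟩
  exact hE.not_one_mem_p_mul ⟨w' - w, sub_mem hw' hw, by linear_combination h⟩

lemma Unramified.exists_mul_one_add_mul_eq_one (hE : Unramified p E) {θ : E}
    (hθ : IsIntBasis p E θ) (b : ℤ_[p]) : ∃ v ∈ 𝒪, (1 + ι b * θ) * v = 1 := by
  refine (hE.2 _ (add_mem (one_mem _) (mul_mem (Subalgebra.algebraMap_mem _ b) hθ.1))).2 ?_
  rintro ⟨w, hw, h⟩
  obtain ⟨⟨c, d⟩, hcd, -⟩ := hθ.2 w hw
  have h1 : ι 1 + ι b * θ = ι (p * c) + ι (p * d) * θ := by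
    simp only [map_one, map_mul, map_natCast, h, hcd]
    ring
  exact PadicInt.irreducible_p.not_isUnit (.of_mul_eq_one c (hθ.coeff_unique h1).1.symm)

lemma CondExp.chiV_one_add_p_pow_mul (hχn : CondExp p E χ n) (hE : Unramified p E)
    (hn : 0 < n) {w : E} (hw : w ∈ 𝒪) : chiV χ (1 + (p : E) ^ n * w) = 1 := by
  have hpw : (p : E) ^ n * w = p * ((p : E) ^ (n - 1) * w) := by
    rw [← mul_assoc, ← pow_succ', Nat.sub_add_cancel hn]
  obtain ⟨v, hv, huv⟩ := hE.exists_mul_one_add_p_mul_eq_one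
    (mul_mem (pow_mem natCast_mem_integralClosure (n - 1)) hw)
  rw [← hpw] at huv
  let u : Eˣ := ⟨_, v, huv, by rw [mul_comm, huv]⟩
  have hu : MemOEiUnits p E n u :=
    ⟨⟨1, w, hw, by simp [u]⟩,
      add_mem (one_mem _) (mul_mem (pow_mem natCast_mem_integralClosure n) hw), hv⟩
  simpa [hχn.1 u hu] using chiV_coe_units χ u

lemma CondExp.chiV_add_p_pow_mul (hχn : CondExp p E χ n) (hE : Unramified p E) (hn : 0 < n)
    {u v w : E} (hv : v ∈ 𝒪) (huv : u * v = 1) (hw : w ∈ 𝒪) :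
    chiV χ (u + p ^ n * w) = chiV χ u := by
  have : u + p ^ n * w = u * (1 + p ^ n * (v * w)) := by
    linear_combination (-(p : E) ^ n * w) * huv
  rw [this, chiV_mul, hχn.chiV_one_add_p_pow_mul hE hn (mul_mem hv hw), mul_one]

lemma CondExp.conductorChar_add (hχn : CondExp p E χ n) (hE : Unramified p E) (hn : 1 < n)
    {w w' : E} (hw : w ∈ 𝒪) (hw' : w' ∈ 𝒪) :
    conductorChar p χ n (w + w') = conductorChar p χ n w * conductorChar p χ n w' := by
  have hp := pow_sub_one_eq_mul_pow_sub_two (p : E) hn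
  obtain ⟨v, hv, huv⟩ := hE.exists_mul_one_add_p_mul_eq_one
    (mul_mem (pow_mem natCast_mem_integralClosure (n - 2)) (add_mem hw hw'))
  rw [← mul_assoc, ← hp] at huv
  have hprod : (1 + (p : E) ^ (n - 1) * w) * (1 + p ^ (n - 1) * w') =
      (1 + p ^ (n - 1) * (w + w')) + p ^ n * (p ^ (n - 2) * (w * w')) := by
    have : (p : E) ^ (n - 1) * p ^ (n - 1) = p ^ n * p ^ (n - 2) := by
      rw [← pow_add, ← pow_add]
      congr 1
      omega
    linear_combination (w * w') * this
  rw [conductorChar, conductorChar, conductorChar, ← chiV_mul, hprod,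
    hχn.chiV_add_p_pow_mul hE (by omega) hv huv
      (mul_mem (pow_mem natCast_mem_integralClosure _) (mul_mem hw hw'))]

lemma CondExp.conductorChar_natCast_mul (hχn : CondExp p E χ n) (hE : Unramified p E)
    (hn : 1 < n) {w : E} (hw : w ∈ 𝒪) (m : ℕ) :
    conductorChar p χ n (m * w) = conductorChar p χ n w ^ m := by
  induction m with
  | zero => simp [conductorChar_zero χ p n]
  | succ m ih =>
    have hmw : (m : E) * w ∈ 𝒪 := mul_mem (Subalgebra.natCast_mem 𝒪 m) hw
    rw [Nat.cast_succ, add_one_mul, hχn.conductorChar_add hE hn hmw hw, ih, pow_succ]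

lemma CondExp.conductorChar_p_mul (hχn : CondExp p E χ n) (hE : Unramified p E) (hn : 0 < n)
    {w : E} (hw : w ∈ 𝒪) : conductorChar p χ n (p * w) = 1 := by
  rw [conductorChar, ← mul_assoc, ← pow_succ, Nat.sub_add_cancel hn,
    hχn.chiV_one_add_p_pow_mul hE hn hw]

lemma CondExp.conductorChar_pow_p (hχn : CondExp p E χ n) (hE : Unramified p E) (hn : 1 < n)
    {w : E} (hw : w ∈ 𝒪) : conductorChar p χ n w ^ p = 1 := by
  rw [← hχn.conductorChar_natCast_mul hE hn hw, hχn.conductorChar_p_mul hE (by omega) hw]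

lemma conductorChar_algebraMap [IsScalarTower ℤ_[p] ℚ_[p] E] (hχQ : TrivialOnQp p E χ)
    (hn : 1 < n) (a : ℤ_[p]) : conductorChar p χ n (ι a) = 1 := by
  have hne : (1 : ℤ_[p]) + p ^ (n - 1) * a ≠ 0 := by
    intro h
    rw [pow_sub_one_eq_mul_pow_sub_two _ hn] at h
    exact PadicInt.irreducible_p.not_isUnit
      (isUnit_of_dvd_one ⟨-((p : ℤ_[p]) ^ (n - 2) * a), by linear_combination h⟩)
  simpa [conductorChar] using chiV_algebraMap_eq_one hχQ hne

lemma CondExp.conductorChar_algebraMap_mul (hχn : CondExp p E χ n) (hE : Unramified p E)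
    (hn : 1 < n) {c : ℤ_[p]} {m : ℕ} (hcm : (p : ℤ_[p]) ∣ c - m) {z : E} (hz : z ∈ 𝒪) :
    conductorChar p χ n (ι c * z) = conductorChar p χ n z ^ m := by
  obtain ⟨d, hd⟩ := hcm
  have hdz : ι d * z ∈ 𝒪 := mul_mem (Subalgebra.algebraMap_mem _ d) hz
  have hmz : (m : E) * z ∈ 𝒪 := mul_mem (Subalgebra.natCast_mem 𝒪 m) hz
  have : ι c * z = m * z + p * (ι d * z) := by
    rw [eq_add_of_sub_eq' hd]
    simp only [map_add, map_mul, map_natCast]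
    ring
  rw [this, hχn.conductorChar_add hE hn hmz (mul_mem natCast_mem_integralClosure hdz),
    hχn.conductorChar_p_mul hE (by omega) hdz, mul_one, hχn.conductorChar_natCast_mul hE hn hz]

lemma CondExp.chiV_one_add_mul_congr (hχn : CondExp p E χ n) (hE : Unramified p E) (hn : 0 < n)
    {θ : E} (hθ : IsIntBasis p E θ) {x y : ℤ_[p]} (h : (p : ℤ_[p]) ^ n ∣ x - y) :
    chiV χ (1 + ι x * θ) = chiV χ (1 + ι y * θ) := by
  obtain ⟨c, hc⟩ := h
  obtain ⟨v, hv, hyv⟩ := hE.exists_mul_one_add_mul_eq_one hθ y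
  have : 1 + ι x * θ = (1 + ι y * θ) + p ^ n * (ι c * θ) := by
    rw [eq_add_of_sub_eq' hc]
    simp only [map_add, map_mul, map_pow, map_natCast]
    ring
  rw [this, hχn.chiV_add_p_pow_mul hE hn hv hyv (mul_mem (Subalgebra.algebraMap_mem _ c) hθ.1)]

section Theta

variable [IsScalarTower ℤ_[p] ℚ_[p] E]

lemma CondExp.exists_conductorChar_ne_one (hχn : CondExp p E χ n) (hE : Unramified p E)
    (hχQ : TrivialOnQp p E χ) (hn : 1 < n) : ∃ w ∈ 𝒪, conductorChar p χ n w ≠ 1 := by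
  obtain ⟨u, ⟨⟨a, w, hw, hu⟩, huO, hu'O⟩, hχu⟩ := hχn.2 (by omega)
  have ha : IsUnit a := by
    refine isUnit_of_not_dvd fun ⟨a', ha'⟩ => (hE.2 u huO).1 ⟨_, hu'O, u.mul_inv⟩
      ⟨ι a' + p ^ (n - 2) * w, add_mem (Subalgebra.algebraMap_mem _ a')
        (mul_mem (pow_mem natCast_mem_integralClosure _) hw), ?_⟩
    rw [hu, ha', pow_sub_one_eq_mul_pow_sub_two _ hn]
    simp only [map_mul, map_natCast]
    ring
  obtain ⟨a', haa'⟩ := ha.exists_right_inv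
  have hι : ι a * ι a' = 1 := by rw [← map_mul, haa', map_one]
  have hsplit : (u : E) = ι a * (1 + p ^ (n - 1) * (ι a' * w)) := by
    rw [hu]
    linear_combination (-(p : E) ^ (n - 1) * w) * hι
  refine ⟨ι a' * w, mul_mem (Subalgebra.algebraMap_mem _ a') hw, fun h => hχu (Units.ext ?_)⟩
  rw [Units.val_one, ← chiV_coe_units, hsplit, chiV_mul, chiV_algebraMap_eq_one hχQ ha.ne_zero,
    one_mul]
  exact h

variable {θ : E}

lemma CondExp.conductorChar_mul_ne_one (hχn : CondExp p E χ n) (hE : Unramified p E)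
    (hχQ : TrivialOnQp p E χ) (hn : 1 < n) (hθ : IsIntBasis p E θ) {b : ℤ_[p]} {v : E}
    (hv : v ∈ 𝒪) (hbv : (1 + ι b * θ) * v = 1) : conductorChar p χ n (θ * v) ≠ 1 := by
  intro h
  have hθv : θ * v ∈ 𝒪 := mul_mem hθ.1 hv
  have hι : ∀ c : ℤ_[p], ι c ∈ 𝒪 := Subalgebra.algebraMap_mem _
  obtain ⟨m, hm⟩ := exists_natCast_dvd_sub b
  have hv1 : conductorChar p χ n v = 1 := by
    have h1 := conductorChar_algebraMap hχQ hn 1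
    rwa [show ι 1 = v + ι b * (θ * v) by rw [map_one, ← hbv]; ring,
      hχn.conductorChar_add hE hn hv (mul_mem (hι b) hθv),
      hχn.conductorChar_algebraMap_mul hE hn hm hθv, h, one_pow, mul_one] at h1
  obtain ⟨w, hw, hw1⟩ := hχn.exists_conductorChar_ne_one hE hχQ hn
  obtain ⟨⟨c, d⟩, hcd, -⟩ :=
    hθ.2 (w * (1 + ι b * θ)) (mul_mem hw (add_mem (one_mem _) (mul_mem (hι b) hθ.1)))
  obtain ⟨mc, hmc⟩ := exists_natCast_dvd_sub c
  obtain ⟨md, hmd⟩ := exists_natCast_dvd_sub d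
  have hw' : w = ι c * v + ι d * (θ * v) := by
    calc w = w * (1 + ι b * θ) * v := by rw [mul_assoc, hbv, mul_one]
      _ = ι c * v + ι d * (θ * v) := by rw [hcd]; ring
  apply hw1
  rw [hw', hχn.conductorChar_add hE hn (mul_mem (hι c) hv) (mul_mem (hι d) hθv),
    hχn.conductorChar_algebraMap_mul hE hn hmc hv, hχn.conductorChar_algebraMap_mul hE hn hmd hθv,
    hv1, h, one_pow, one_pow, one_mul]

lemma CondExp.sum_inv_chiV_eq_zero (hχn : CondExp p E χ n) (hE : Unramified p E)
    (hχQ : TrivialOnQp p E χ) (hn : 1 < n) (hθ : IsIntBasis p E θ) (b : ℤ_[p]) :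
    ∑ m ∈ range p, (chiV χ (1 + ι (b + m * p ^ (n - 1)) * θ))⁻¹ = 0 := by
  obtain ⟨v, hv, hbv⟩ := hE.exists_mul_one_add_mul_eq_one hθ b
  have hθv : θ * v ∈ 𝒪 := mul_mem hθ.1 hv
  set ζ := conductorChar p χ n (θ * v)
  have hshift : ∀ m : ℕ,
      chiV χ (1 + ι (b + m * p ^ (n - 1)) * θ) = chiV χ (1 + ι b * θ) * ζ ^ m := by
    intro m
    rw [← hχn.conductorChar_natCast_mul hE hn hθv, conductorChar, ← chiV_mul]
    congr 1
    simp only [map_add, map_mul, map_pow, map_natCast]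
    linear_combination (-(p : E) ^ (n - 1) * m * θ) * hbv
  have hζ : ζ⁻¹ ≠ 1 := inv_ne_one.2 (hχn.conductorChar_mul_ne_one hE hχQ hn hθ hv hbv)
  have hζp : ζ⁻¹ ^ p = 1 := by rw [inv_pow, hχn.conductorChar_pow_p hE hn hθv, inv_one]
  simp_rw [hshift, mul_inv, ← inv_pow]
  rw [← mul_sum, geom_sum_eq hζ, hζp, sub_self, zero_div, mul_zero]

end Theta

end Character

end ArakawaQuad

open Finset

theorem lemma_3_6_2_general (p : ℕ) [Fact p.Prime]
    (E : Type*) [Field E] [Algebra ℚ_[p] E] [Algebra ℤ_[p] E]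
    [IsScalarTower ℤ_[p] ℚ_[p] E]
    (hE : Unramified p E) (θ : E) (hθ : IsIntBasis p E θ)
    (χ : Eˣ →* ℂˣ) (hχQ : TrivialOnQp p E χ)
    (n : ℕ) (hn : 1 < n) (hχn : CondExp p E χ n)
    (k : ℕ) (T : Finset ℤ_[p])
    (hTmem : ∀ b ∈ T, (p : ℤ_[p]) ^ k ∣ b ∧ (k < n → ¬ (p : ℤ_[p]) ^ (k + 1) ∣ b))
    (hTrep : ∀ x : ℤ_[p], (p : ℤ_[p]) ^ k ∣ x → (k < n → ¬ (p : ℤ_[p]) ^ (k + 1) ∣ x) →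
      ∃! b, b ∈ T ∧ (p : ℤ_[p]) ^ n ∣ (x - b)) :
    (k + 1 < n → ∑ b ∈ T, (chiV χ (1 + algebraMap ℤ_[p] E b * θ))⁻¹ = 0) ∧
    (k + 1 = n → ∑ b ∈ T, (chiV χ (1 + algebraMap ℤ_[p] E b * θ))⁻¹ = -1) ∧
    (k = n → ∑ b ∈ T, (chiV χ (1 + algebraMap ℤ_[p] E b * θ))⁻¹ = 1) := by
  have hp : p ≠ 0 := (Fact.out : p.Prime).ne_zero
  set g : ℤ_[p] → ℂ := fun b => (chiV χ (1 + algebraMap ℤ_[p] E b * θ))⁻¹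
  have hg : ∀ x y, (p : ℤ_[p]) ^ n ∣ x - y → g x = g y := fun x y h => by
    simp only [g, hχn.chiV_one_add_mul_congr hE (by omega) hθ h]
  have hfiber (b : ℤ_[p]) : ∑ m ∈ range p, g (b + m * p ^ (n - 1)) = 0 :=
    hχn.sum_inv_chiV_eq_zero hE hχQ hn hθ b
  have hg0 : g 0 = 1 := by simp [g, chiV_one]
  refine ⟨fun hkn => ?_, fun hkn => ?_, fun hkn => ?_⟩
  · have hT : IsResidueSystem ((p : ℤ_[p]) ^ n)
        (fun x => (p : ℤ_[p]) ^ k ∣ x ∧ (k < n → ¬ (p : ℤ_[p]) ^ (k + 1) ∣ x)) T :=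
      ⟨hTmem, fun x hx => hTrep x hx.1 hx.2⟩
    refine hT.sum_eq_zero (fun x ⟨hkx, hx⟩ => ⟨?_, fun hk h => ?_⟩) hg hp fun b _ => hfiber b
    · exact dvd_add hkx (pow_dvd_pow _ (by omega))
    · exact hx hk ((dvd_add_left (pow_dvd_pow _ (by omega))).1 h)
  · obtain rfl : n = k + 1 := hkn.symm
    have hT : IsResidueSystem ((p : ℤ_[p]) ^ (k + 1)) ((p : ℤ_[p]) ^ k ∣ ·) (insert 0 T) :=
      IsResidueSystem.insert_zero
        ⟨fun b hb => ⟨(hTmem b hb).1, (hTmem b hb).2 k.lt_succ_self⟩,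
          fun x hx => hTrep x hx.1 fun _ => hx.2⟩ (dvd_zero _)
    have hsum := hT.sum_eq_zero (fun x hx => dvd_add hx dvd_rfl) hg hp
      fun b _ => by simpa using hfiber b
    rw [sum_insert fun h => (hTmem 0 h).2 k.lt_succ_self (dvd_zero _), hg0] at hsum
    linear_combination hsum
  · subst hkn
    obtain ⟨b, hb, rfl⟩ := IsResidueSystem.exists_eq_singleton
      ⟨fun b hb => (hTmem b hb).1, fun x hx => hTrep x hx (absurd · (lt_irrefl k))⟩
    rw [sum_singleton]
    exact (hg b 0 (by simpa)).trans hg0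

/-- **Lemma 3.6(2)** (inert prime case). Let `E/ℚ_p` be an unramified quadratic
extension, `{1, θ}` a `ℤ_p`-basis of `𝒪_E`, and `χ : E^× → ℂ^×` trivial on `ℚ_p^×`
with conductor exponent `n > 1`. For `0 ≤ k ≤ n`, the sum `S_k = ∑_b χ(1+bθ)⁻¹` over
a complete set of representatives `b` of `ℤ_p/p^n ℤ_p` with `ord_p(b) = k` (for
`k = n` this means `b ≡ 0 mod p^n`) satisfies `S_k = 0` if `k < n-1`, `S_{n-1} = -1`,
and `S_n = 1`. -/
theorem lemma_3_6_2 (p : ℕ) [Fact p.Prime]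
    (E : Type*) [Field E] [Algebra ℚ_[p] E] [Algebra ℤ_[p] E]
    [IsScalarTower ℤ_[p] ℚ_[p] E]
    (hE : Unramified p E) (θ : E) (hθ : IsIntBasis p E θ)
    (χ : Eˣ →* ℂˣ) (hχQ : TrivialOnQp p E χ)
    (n : ℕ) (hn : 1 < n) (hχn : CondExp p E χ n)
    (k : ℕ) (hk : k ≤ n) (T : Finset ℤ_[p])
    (hTmem : ∀ b ∈ T, (p : ℤ_[p]) ^ k ∣ b ∧ (k < n → ¬ (p : ℤ_[p]) ^ (k + 1) ∣ b))
    (hTrep : ∀ x : ℤ_[p], (p : ℤ_[p]) ^ k ∣ x → (k < n → ¬ (p : ℤ_[p]) ^ (k + 1) ∣ x) →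
      ∃! b, b ∈ T ∧ (p : ℤ_[p]) ^ n ∣ (x - b)) :
    (k + 1 < n → ∑ b ∈ T, (chiV χ (1 + algebraMap ℤ_[p] E b * θ))⁻¹ = 0) ∧
    (k + 1 = n → ∑ b ∈ T, (chiV χ (1 + algebraMap ℤ_[p] E b * θ))⁻¹ = -1) ∧
    (k = n → ∑ b ∈ T, (chiV χ (1 + algebraMap ℤ_[p] E b * θ))⁻¹ = 1) :=
  lemma_3_6_2_general p E hE θ hθ χ hχQ n hn hχn k T hTmem hTrep
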